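/- arXiv:math/0501445 — 4 statements merged into one kernel-verified Lean document; each statement's English description precedes it below -/
import Mathlib

section
/- (Expansion identity for the multi-scale test function.) Let Ω ⊂ ℝ^{n−1} (n = 2 or 3) be a rectangle, f ∈ C², and let U ∈ C³(ℝ) satisfy U'' − c₀U' + f(U) = 0. Let b : Ω → ℝ be continuous with mean zero, and let χ ∈ C²(Ω) solve −Δχ = b with zero Neumann condition. Set a₀ = (1/|Ω|)∫_Ω |∇χ|², α = −a₀/2, γ = c₀ a₀/2. Let ũ ∈ C²(ℝ × Ω) solve Δ_{ξ,x̃} ũ − c₀ ũ_ξ + f'(U(ξ)) ũ = (a₀ − |∇χ(x̃)|²) U''(ξ) with zero Neumann condition on ℝ × ∂Ω. For δ > 0 define ξ = (1 + αδ²)x₁ + δχ(x̃) and v(x₁, x̃) = U(ξ) + δ² ũ(ξ, x̃). Then for all x = (x₁, x̃): Δ_x v + δ b(x̃) ∂_{x₁} v + f(v) − (c₀ + δ²γ) ∂_{x₁} v = δ³A + δ⁴B + δ⁵D + δ⁶E + [f(v) − f(U) − f'(U) δ² ũ], where all terms on the right are evaluated at (ξ, x̃) and A = b α U' + 2 ∇_{x̃}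 ũ_ξ · ∇χ, B = α² U'' + 2α ũ_{ξξ} + ũ_{ξξ}|∇χ|² − γα U' − c₀ α ũ_ξ − γ ũ_ξ, D = α b ũ_ξ, E = α² ũ_{ξξ} − αγ ũ_ξ. -/
/-!
Write `v = W ∘ Φ` with `Φ (x₁, x̃) = (κ x₁ + δ χ x̃, x̃)`, `κ = 1 + α δ²`, and
`W (ξ, x̃) = U ξ + δ² ũ (ξ, x̃)`. Differentiating along coordinate lines gives, at `Φ x`,
`Δv = (κ² + δ² |∇χ|²) W_ξξ + 2 δ ∇_x̃ W_ξ · ∇χ + Δ_x̃ W + δ Δχ W_ξ`.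
Substituting `U'' = c₀ U' - f U`, the corrector equation for `ũ` and `Δχ = -b`, the terms of
order `δ⁰` and `δ¹` cancel, those of order `δ²` cancel because `α = -a₀/2` and `γ = c₀ a₀/2`,
and what remains is the stated expansion.
-/

open MeasureTheory

noncomputable section

/-- Partial derivative of `g : ℝ^m → ℝ` in the `i`-th coordinate direction. -/
def pd {m : ℕ} (i : Fin m) (g : (Fin m → ℝ) → ℝ) (x : Fin m → ℝ) : ℝ :=
  deriv (fun t : ℝ => g (Function.update x i t)) (x i)

/-- Cross-sectional Laplacian `Δ_{x̃} g = ∑ᵢ ∂ᵢᵢ g`. -/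
def lapT {m : ℕ} (g : (Fin m → ℝ) → ℝ) (x : Fin m → ℝ) : ℝ :=
  ∑ i : Fin m, pd i (pd i g) x

/-- `|∇χ|² = ∑ᵢ (∂ᵢχ)²`. -/
def gradSq {m : ℕ} (g : (Fin m → ℝ) → ℝ) (x : Fin m → ℝ) : ℝ :=
  ∑ i : Fin m, (pd i g x) ^ 2

/-- Partial derivative in the first (scalar) variable of `w : ℝ × ℝ^m → ℝ`. -/
def axD {m : ℕ} (w : ℝ × (Fin m → ℝ) → ℝ) (z : ℝ × (Fin m → ℝ)) : ℝ :=
  deriv (fun t : ℝ => w (t, z.2)) z.1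

/-- Full Laplacian of `w : ℝ × ℝ^m → ℝ` in all variables. -/
def lapFull {m : ℕ} (w : ℝ × (Fin m → ℝ) → ℝ) (z : ℝ × (Fin m → ℝ)) : ℝ :=
  deriv (fun t : ℝ => axD w (t, z.2)) z.1 + lapT (fun y => w (z.1, y)) z.2

section Curves

variable {E : Type*} [NormedAddCommGroup E] [NormedSpace ℝ E]

theorem deriv_deriv_comp_of_hasDerivAt {F : E → ℝ} (hF : ContDiff ℝ 2 F) {c c' : ℝ → E}
    {c'' : E} {t : ℝ} (hc : ∀ s, HasDerivAt c (c' s) s) (hc' : HasDerivAt c' c'' t) :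
    deriv (deriv fun s => F (c s)) t
      = fderiv ℝ (fderiv ℝ F) (c t) (c' t) (c' t) + fderiv ℝ F (c t) c'' := by
  have hF1 : Differentiable ℝ F := hF.differentiable two_ne_zero
  have hF2 : Differentiable ℝ (fderiv ℝ F) :=
    (hF.fderiv_right (m := 1) (by norm_num)).differentiable one_ne_zero
  have hfirst : (deriv fun s => F (c s)) = fun s => fderiv ℝ F (c s) (c' s) :=
    funext fun s => ((hF1 (c s)).hasFDerivAt.comp_hasDerivAt s (hc s)).deriv
  rw [hfirst]
  exact (((hF2 (c t)).hasFDerivAt.comp_hasDerivAt t (hc t)).clm_apply hc').deriv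

theorem deriv_fderiv_apply_comp {F : E → ℝ} (hF : ContDiff ℝ 2 F) {c : ℝ → E} {w : E}
    {t : ℝ} (hc : HasDerivAt c w t) (u : E) :
    deriv (fun s => fderiv ℝ F (c s) u) t = fderiv ℝ (fderiv ℝ F) (c t) w u := by
  have hF2 : Differentiable ℝ (fderiv ℝ F) :=
    (hF.fderiv_right (m := 1) (by norm_num)).differentiable one_ne_zero
  simpa only [Function.comp_apply, map_zero, add_zero] using
    (((hF2 (c t)).hasFDerivAt.comp_hasDerivAt t hc).clm_apply (hasDerivAt_const t u)).deriv

theorem ContinuousLinearMap.apply_prodMk_prodMk_self (B : ℝ × E →L[ℝ] ℝ × E →L[ℝ] ℝ)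
    (a : ℝ) (e : E) :
    B (a, e) (a, e)
      = a ^ 2 * B (1, 0) (1, 0) + a * (B (1, 0) (0, e) + B (0, e) (1, 0)) + B (0, e) (0, e) := by
  have hsplit : ((a, e) : ℝ × E) = a • ((1 : ℝ), (0 : E)) + ((0 : ℝ), e) := by simp
  rw [hsplit]
  simp only [map_add, map_smul, add_apply, smul_apply, smul_eq_mul]
  ring

end Curves

section Coordinates

variable {m : ℕ}

theorem pd_update_self (i : Fin m) (g : (Fin m → ℝ) → ℝ) (x : Fin m → ℝ) (t : ℝ) :
    pd i g (Function.update x i t) = deriv (fun s => g (Function.update x i s)) t := by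
  simp only [pd, Function.update_idem, Function.update_self]

theorem pd_pd_eq_deriv_deriv (i : Fin m) (g : (Fin m → ℝ) → ℝ) (x : Fin m → ℝ) :
    pd i (pd i g) x = deriv (deriv fun t => g (Function.update x i t)) (x i) := by
  show deriv (fun t => pd i g (Function.update x i t)) (x i) = _
  simp only [pd_update_self]

theorem pd_const_mul (i : Fin m) (c : ℝ) (g : (Fin m → ℝ) → ℝ) :
    pd i (fun y => c * g y) = fun y => c * pd i g y :=
  funext fun x => congrFun (deriv_const_mul_field' c) (x i)

theorem pd_const_add (i : Fin m) (c : ℝ) (g : (Fin m → ℝ) → ℝ) :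
    pd i (fun y => c + g y) = pd i g :=
  funext fun _ => deriv_const_add c

theorem pd_eq_fderiv {i : Fin m} {g : (Fin m → ℝ) → ℝ} {x : Fin m → ℝ}
    (hg : DifferentiableAt ℝ g x) : pd i g x = fderiv ℝ g x (Pi.single i 1) :=
  (hg.hasFDerivAt.comp_hasDerivAt_of_eq (x i) (hasDerivAt_update x i (x i))
    (Function.update_eq_self i x).symm).deriv

theorem contDiff_pd {n : ℕ} (i : Fin m) {g : (Fin m → ℝ) → ℝ} (hg : ContDiff ℝ (n + 1) g) :
    ContDiff ℝ n (pd i g) := by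
  have hpd : pd i g = fun x => fderiv ℝ g x (Pi.single i 1) :=
    funext fun x => pd_eq_fderiv ((hg.differentiable (by simp)) x)
  rw [hpd]
  exact (hg.fderiv_right (by norm_cast)).clm_apply contDiff_const

theorem hasDerivAt_comp_update {i : Fin m} {g : (Fin m → ℝ) → ℝ} (hg : Differentiable ℝ g)
    (x : Fin m → ℝ) (t : ℝ) :
    HasDerivAt (fun s => g (Function.update x i s)) (pd i g (Function.update x i t)) t := by
  rw [pd_update_self]
  exact ((hg.comp (contDiff_update 1 x i).differentiable_one) t).hasDerivAt

theorem lapT_const_mul (c : ℝ) (g : (Fin m → ℝ) → ℝ) :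
    lapT (fun y => c * g y) = fun x => c * lapT g x := by
  funext x
  simp only [lapT, pd_const_mul, Finset.mul_sum]

theorem gradSq_const_mul (c : ℝ) (g : (Fin m → ℝ) → ℝ) :
    gradSq (fun y => c * g y) = fun x => c ^ 2 * gradSq g x := by
  funext x
  simp only [gradSq, pd_const_mul, Finset.mul_sum, mul_pow]

theorem lapT_const_add (c : ℝ) (g : (Fin m → ℝ) → ℝ) :
    lapT (fun y => c + g y) = lapT g := by
  funext x
  simp only [lapT, pd_const_add]

theorem axD_eq_fderiv {w : ℝ × (Fin m → ℝ) → ℝ} {z : ℝ × (Fin m → ℝ)}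
    (hw : DifferentiableAt ℝ w z) : axD w z = fderiv ℝ w z (1, 0) :=
  (hw.hasFDerivAt.comp_hasDerivAt z.1
    ((hasDerivAt_id z.1).prodMk (hasDerivAt_const z.1 z.2))).deriv

theorem contDiff_axD {n : ℕ} {w : ℝ × (Fin m → ℝ) → ℝ} (hw : ContDiff ℝ (n + 1) w) :
    ContDiff ℝ n (axD w) := by
  have haxD : axD w = fun z => fderiv ℝ w z (1, 0) :=
    funext fun z => axD_eq_fderiv ((hw.differentiable (by simp)) z)
  rw [haxD]
  exact (hw.fderiv_right (by norm_cast)).clm_apply contDiff_const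

theorem axD_axD_eq_fderiv_fderiv {w : ℝ × (Fin m → ℝ) → ℝ} (hw : ContDiff ℝ 2 w)
    (z : ℝ × (Fin m → ℝ)) : axD (axD w) z = fderiv ℝ (fderiv ℝ w) z (1, 0) (1, 0) := by
  have haxD : axD w = fun z => fderiv ℝ w z (1, 0) :=
    funext fun z => axD_eq_fderiv ((hw.differentiable two_ne_zero) z)
  rw [haxD]
  exact deriv_fderiv_apply_comp hw ((hasDerivAt_id z.1).prodMk (hasDerivAt_const z.1 z.2)) _

theorem pd_axD_eq_fderiv_fderiv {w : ℝ × (Fin m → ℝ) → ℝ} (hw : ContDiff ℝ 2 w) (i : Fin m)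
    (s : ℝ) (x : Fin m → ℝ) :
    pd i (fun y => axD w (s, y)) x = fderiv ℝ (fderiv ℝ w) (s, x) (0, Pi.single i 1) (1, 0) := by
  have haxD : axD w = fun z => fderiv ℝ w z (1, 0) :=
    funext fun z => axD_eq_fderiv ((hw.differentiable two_ne_zero) z)
  have hc := (hasDerivAt_const (x i) s).prodMk (hasDerivAt_update x i (x i))
  rw [haxD, pd, deriv_fderiv_apply_comp hw hc, Function.update_eq_self]

theorem pd_pd_eq_fderiv_fderiv {w : ℝ × (Fin m → ℝ) → ℝ} (hw : ContDiff ℝ 2 w) (i : Fin m)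
    (s : ℝ) (x : Fin m → ℝ) :
    pd i (pd i fun y => w (s, y)) x
      = fderiv ℝ (fderiv ℝ w) (s, x) (0, Pi.single i 1) (0, Pi.single i 1) := by
  have hc : ∀ t, HasDerivAt (fun t => (s, Function.update x i t))
      ((0 : ℝ), (Pi.single i 1 : Fin m → ℝ)) t :=
    fun t => (hasDerivAt_const t s).prodMk (hasDerivAt_update x i t)
  rw [pd_pd_eq_deriv_deriv, deriv_deriv_comp_of_hasDerivAt hw hc (hasDerivAt_const _ _),
    Function.update_eq_self, map_zero, add_zero]

theorem axD_comp_shear (w : ℝ × (Fin m → ℝ) → ℝ) (κ : ℝ) (ψ : (Fin m → ℝ) → ℝ)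
    (t : ℝ) (y : Fin m → ℝ) :
    axD (fun z => w (κ * z.1 + ψ z.2, z.2)) (t, y) = κ * axD w (κ * t + ψ y, y) := by
  have h := deriv_comp_mul_left (f := fun u => w (u + ψ y, y)) (c := κ) (x := t)
  rwa [deriv_comp_add_const (f := fun u => w (u, y)), smul_eq_mul] at h

theorem axD_axD_comp_shear (w : ℝ × (Fin m → ℝ) → ℝ) (κ : ℝ) (ψ : (Fin m → ℝ) → ℝ)
    (t : ℝ) (y : Fin m → ℝ) :
    axD (axD fun z => w (κ * z.1 + ψ z.2, z.2)) (t, y)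
      = κ ^ 2 * axD (axD w) (κ * t + ψ y, y) := by
  have h : axD (fun z => w (κ * z.1 + ψ z.2, z.2))
      = fun z => κ * axD w (κ * z.1 + ψ z.2, z.2) :=
    funext fun z => axD_comp_shear w κ ψ z.1 z.2
  rw [h]
  change deriv (fun s => κ * axD w (κ * s + ψ y, y)) t = _
  rw [deriv_const_mul_field']
  change κ * axD (fun z => axD w (κ * z.1 + ψ z.2, z.2)) (t, y) = _
  rw [axD_comp_shear]
  ring

theorem pd_pd_comp_shear {w : ℝ × (Fin m → ℝ) → ℝ} (hw : ContDiff ℝ 2 w)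
    {ψ : (Fin m → ℝ) → ℝ} (hψ : ContDiff ℝ 2 ψ) (i : Fin m) (s : ℝ) (x : Fin m → ℝ) :
    pd i (pd i fun y => w (s + ψ y, y)) x
      = pd i ψ x ^ 2 * axD (axD w) (s + ψ x, x)
        + 2 * (pd i (fun y => axD w (s + ψ x, y)) x * pd i ψ x)
        + pd i (pd i fun y => w (s + ψ x, y)) x
        + pd i (pd i ψ) x * axD w (s + ψ x, x) := by
  have hψ1 : Differentiable ℝ ψ := hψ.differentiable two_ne_zero
  have hψ2 : Differentiable ℝ (pd i ψ) :=
    (contDiff_pd (n := 1) i hψ).differentiable one_ne_zero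
  have hc : ∀ t, HasDerivAt (fun t => (s + ψ (Function.update x i t), Function.update x i t))
      (pd i ψ (Function.update x i t), (Pi.single i 1 : Fin m → ℝ)) t :=
    fun t => ((hasDerivAt_comp_update hψ1 x t).const_add s).prodMk (hasDerivAt_update x i t)
  have hc' : HasDerivAt (fun t => (pd i ψ (Function.update x i t), (Pi.single i 1 : Fin m → ℝ)))
      (pd i (pd i ψ) x, 0) (x i) := by
    simpa only [Function.update_eq_self] using (hasDerivAt_comp_update (i := i) hψ2 x (x i)).prodMk
      (hasDerivAt_const (x i) (Pi.single i 1 : Fin m → ℝ))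
  have hsymm := hw.contDiffAt.isSymmSndFDerivAt (x := (s + ψ x, x))
    (by simp [minSmoothness_of_isRCLikeNormedField])
  have hsmul : ((pd i (pd i ψ) x, 0) : ℝ × (Fin m → ℝ)) = pd i (pd i ψ) x • (1, 0) := by simp
  rw [pd_pd_eq_deriv_deriv, deriv_deriv_comp_of_hasDerivAt hw hc hc']
  simp only [Function.update_eq_self]
  rw [ContinuousLinearMap.apply_prodMk_prodMk_self, hsymm (1, 0) (0, Pi.single i 1), hsmul,
    map_smul, smul_eq_mul, axD_axD_eq_fderiv_fderiv hw, pd_axD_eq_fderiv_fderiv hw,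
    pd_pd_eq_fderiv_fderiv hw, axD_eq_fderiv ((hw.differentiable two_ne_zero) _)]
  ring

theorem lapFull_comp_shear {w : ℝ × (Fin m → ℝ) → ℝ} (hw : ContDiff ℝ 2 w)
    {ψ : (Fin m → ℝ) → ℝ} (hψ : ContDiff ℝ 2 ψ) (κ t : ℝ) (y : Fin m → ℝ) :
    lapFull (fun z => w (κ * z.1 + ψ z.2, z.2)) (t, y)
      = (κ ^ 2 + gradSq ψ y) * axD (axD w) (κ * t + ψ y, y)
        + 2 * ∑ i, pd i (fun y' => axD w (κ * t + ψ y, y')) y * pd i ψ y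
        + lapT (fun y' => w (κ * t + ψ y, y')) y + lapT ψ y * axD w (κ * t + ψ y, y) := by
  change axD (axD fun z => w (κ * z.1 + ψ z.2, z.2)) (t, y)
    + lapT (fun y' => w (κ * t + ψ y', y')) y = _
  simp only [axD_axD_comp_shear, lapT, gradSq, pd_pd_comp_shear hw hψ, Finset.sum_add_distrib]
  rw [← Finset.sum_mul, ← Finset.mul_sum, ← Finset.sum_mul]
  ring

section Ansatz

variable {U : ℝ → ℝ} {ut : ℝ × (Fin m → ℝ) → ℝ}

theorem axD_fst_add_const_mul (hU : Differentiable ℝ U) (hut : Differentiable ℝ ut) (c : ℝ) :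
    axD (fun p => U p.1 + c * ut p) = fun p => deriv U p.1 + c * axD ut p := by
  funext p
  have hline : Differentiable ℝ fun t : ℝ => ut (t, p.2) :=
    hut.comp (differentiable_id.prodMk (differentiable_const _))
  change deriv (fun t => U t + c * ut (t, p.2)) p.1
    = deriv U p.1 + c * deriv (fun t => ut (t, p.2)) p.1
  rw [deriv_fun_add (hU _) ((hline _).const_mul c), deriv_const_mul_field']

theorem axD_multiscale_ansatz (hU : Differentiable ℝ U) (hut : Differentiable ℝ ut)
    (χ : (Fin m → ℝ) → ℝ) (κ δ t : ℝ) (y : Fin m → ℝ) :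
    axD (fun z => U (κ * z.1 + δ * χ z.2) + δ ^ 2 * ut (κ * z.1 + δ * χ z.2, z.2)) (t, y)
      = κ * (deriv U (κ * t + δ * χ y) + δ ^ 2 * axD ut (κ * t + δ * χ y, y)) := by
  refine (axD_comp_shear (fun p => U p.1 + δ ^ 2 * ut p) κ (fun y => δ * χ y) t y).trans ?_
  rw [axD_fst_add_const_mul hU hut]

theorem lapFull_multiscale_ansatz (hU : ContDiff ℝ 2 U) (hut : ContDiff ℝ 2 ut)
    {χ : (Fin m → ℝ) → ℝ} (hχ : ContDiff ℝ 2 χ) (κ δ t : ℝ) (y : Fin m → ℝ) :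
    lapFull (fun z => U (κ * z.1 + δ * χ z.2) + δ ^ 2 * ut (κ * z.1 + δ * χ z.2, z.2)) (t, y)
      = (κ ^ 2 + δ ^ 2 * gradSq χ y)
          * (deriv (deriv U) (κ * t + δ * χ y) + δ ^ 2 * axD (axD ut) (κ * t + δ * χ y, y))
        + 2 * δ ^ 3 * ∑ i, pd i (fun y' => axD ut (κ * t + δ * χ y, y')) y * pd i χ y
        + δ ^ 2 * lapT (fun y' => ut (κ * t + δ * χ y, y')) y
        + δ * lapT χ y * (deriv U (κ * t + δ * χ y) + δ ^ 2 * axD ut (κ * t + δ * χ y, y)) := by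
  have hW : ContDiff ℝ 2 fun p : ℝ × (Fin m → ℝ) => U p.1 + δ ^ 2 * ut p :=
    (hU.comp contDiff_fst).add (contDiff_const.mul hut)
  have hU' : Differentiable ℝ (deriv U) :=
    ((contDiff_succ_iff_deriv (n := 1)).mp hU).2.2.differentiable one_ne_zero
  have haxut : Differentiable ℝ (axD ut) :=
    (contDiff_axD (n := 1) hut).differentiable one_ne_zero
  refine (lapFull_comp_shear hW (contDiff_const.mul hχ) κ t y).trans ?_
  simp only [axD_fst_add_const_mul (hU.differentiable two_ne_zero)
      (hut.differentiable two_ne_zero), axD_fst_add_const_mul hU' haxut, pd_const_add,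
    pd_const_mul, lapT_const_add, lapT_const_mul, gradSq_const_mul]
  simp only [Finset.mul_sum]
  ring_nf

end Ansatz

end Coordinates

theorem multiscale_expansion_identity_general
    {m : ℕ}
    (lo hi : Fin m → ℝ)
    (f : ℝ → ℝ)
    (U : ℝ → ℝ) (hU : ContDiff ℝ 3 U) (c₀ : ℝ)
    (hode : ∀ ξ : ℝ, deriv (deriv U) ξ - c₀ * deriv U ξ + f (U ξ) = 0)
    (b : (Fin m → ℝ) → ℝ)
    (χ : (Fin m → ℝ) → ℝ) (hχ : ContDiff ℝ 2 χ)
    (hχeq : ∀ x ∈ Set.Icc lo hi, -(lapT χ x) = b x)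
    (a₀ α γ : ℝ)
    (hα : α = -a₀ / 2) (hγ : γ = c₀ * a₀ / 2)
    (ut : ℝ × (Fin m → ℝ) → ℝ) (hut : ContDiff ℝ 2 ut)
    (hutEq : ∀ ξ : ℝ, ∀ x ∈ Set.Icc lo hi,
      lapFull ut (ξ, x) - c₀ * axD ut (ξ, x) + deriv f (U ξ) * ut (ξ, x)
        = (a₀ - gradSq χ x) * deriv (deriv U) ξ)
    (δ : ℝ)
    (v : ℝ × (Fin m → ℝ) → ℝ)
    (hv : v = fun z : ℝ × (Fin m → ℝ) =>
      U ((1 + α * δ ^ 2) * z.1 + δ * χ z.2)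
        + δ ^ 2 * ut ((1 + α * δ ^ 2) * z.1 + δ * χ z.2, z.2)) :
    ∀ x₁ : ℝ, ∀ xt ∈ Set.Icc lo hi,
      lapFull v (x₁, xt) + δ * b xt * axD v (x₁, xt) + f (v (x₁, xt))
          - (c₀ + δ ^ 2 * γ) * axD v (x₁, xt)
        = (let ξ : ℝ := (1 + α * δ ^ 2) * x₁ + δ * χ xt
           δ ^ 3 * (b xt * α * deriv U ξ
                + 2 * ∑ i : Fin m, pd i (fun y => axD ut (ξ, y)) xt * pd i χ xt)
            + δ ^ 4 * (α ^ 2 * deriv (deriv U) ξ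
                + 2 * α * axD (axD ut) (ξ, xt)
                + axD (axD ut) (ξ, xt) * gradSq χ xt
                - γ * α * deriv U ξ - c₀ * α * axD ut (ξ, xt) - γ * axD ut (ξ, xt))
            + δ ^ 5 * (α * b xt * axD ut (ξ, xt))
            + δ ^ 6 * (α ^ 2 * axD (axD ut) (ξ, xt) - α * γ * axD ut (ξ, xt))
            + (f (v (x₁, xt)) - f (U ξ) - deriv f (U ξ) * (δ ^ 2 * ut (ξ, xt)))) := by
  intro x₁ xt hxt
  subst hv hα hγ
  have hU2 : ContDiff ℝ 2 U := hU.of_le (by norm_num)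
  set ξ := (1 + -a₀ / 2 * δ ^ 2) * x₁ + δ * χ xt
  have hcorr : axD (axD ut) (ξ, xt) + lapT (fun y => ut (ξ, y)) xt - c₀ * axD ut (ξ, xt)
      + deriv f (U ξ) * ut (ξ, xt) = (a₀ - gradSq χ xt) * deriv (deriv U) ξ :=
    hutEq ξ xt hxt
  rw [lapFull_multiscale_ansatz hU2 hut hχ, axD_multiscale_ansatz
    (hU2.differentiable two_ne_zero) (hut.differentiable two_ne_zero)]
  linear_combination hode ξ + δ ^ 2 * hcorr
    - (δ * deriv U ξ + δ ^ 3 * axD ut (ξ, xt)) * hχeq xt hxt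

/-- **Expansion identity for the multi-scale test function.**
With `ξ = (1 + αδ²)x₁ + δχ(x̃)` and `v = U(ξ) + δ²ũ(ξ, x̃)`, where
`−Δχ = b` (zero Neumann), `ũ` solves the corrector equation
`Δ_{ξ,x̃}ũ − c₀ũ_ξ + f'(U)ũ = (a₀ − |∇χ|²)U''` (zero Neumann),
`a₀ = ⟨|∇χ|²⟩`, `α = −a₀/2`, `γ = c₀a₀/2`, one has
`Δv + δb∂₁v + f(v) − (c₀ + δ²γ)∂₁v = δ³A + δ⁴B + δ⁵D + δ⁶E + [f(v) − f(U) − f'(U)δ²ũ]`. -/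
theorem multiscale_expansion_identity
    {m : ℕ} (hm : m = 1 ∨ m = 2)
    (lo hi : Fin m → ℝ) (hrect : ∀ i, lo i < hi i)
    (f : ℝ → ℝ) (hf : ContDiff ℝ 2 f)
    (U : ℝ → ℝ) (hU : ContDiff ℝ 3 U) (c₀ : ℝ)
    (hode : ∀ ξ : ℝ, deriv (deriv U) ξ - c₀ * deriv U ξ + f (U ξ) = 0)
    (b : (Fin m → ℝ) → ℝ) (hb : Continuous b)
    (hbmean : ∫ x in Set.Icc lo hi, b x = 0)
    (χ : (Fin m → ℝ) → ℝ) (hχ : ContDiff ℝ 2 χ)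
    (hχeq : ∀ x ∈ Set.Icc lo hi, -(lapT χ x) = b x)
    (hχN : ∀ x ∈ Set.Icc lo hi, ∀ i : Fin m,
      (x i = lo i ∨ x i = hi i) → pd i χ x = 0)
    (a₀ α γ : ℝ)
    (ha₀ : a₀ = (1 / (volume (Set.Icc lo hi)).toReal) * ∫ x in Set.Icc lo hi, gradSq χ x)
    (hα : α = -a₀ / 2) (hγ : γ = c₀ * a₀ / 2)
    (ut : ℝ × (Fin m → ℝ) → ℝ) (hut : ContDiff ℝ 2 ut)
    (hutEq : ∀ ξ : ℝ, ∀ x ∈ Set.Icc lo hi,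
      lapFull ut (ξ, x) - c₀ * axD ut (ξ, x) + deriv f (U ξ) * ut (ξ, x)
        = (a₀ - gradSq χ x) * deriv (deriv U) ξ)
    (hutN : ∀ ξ : ℝ, ∀ x ∈ Set.Icc lo hi, ∀ i : Fin m,
      (x i = lo i ∨ x i = hi i) → pd i (fun y => ut (ξ, y)) x = 0)
    (δ : ℝ) (hδ : 0 < δ)
    (v : ℝ × (Fin m → ℝ) → ℝ)
    (hv : v = fun z : ℝ × (Fin m → ℝ) =>
      U ((1 + α * δ ^ 2) * z.1 + δ * χ z.2)
        + δ ^ 2 * ut ((1 + α * δ ^ 2) * z.1 + δ * χ z.2, z.2)) :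
    ∀ x₁ : ℝ, ∀ xt ∈ Set.Icc lo hi,
      lapFull v (x₁, xt) + δ * b xt * axD v (x₁, xt) + f (v (x₁, xt))
          - (c₀ + δ ^ 2 * γ) * axD v (x₁, xt)
        = (let ξ : ℝ := (1 + α * δ ^ 2) * x₁ + δ * χ xt
           δ ^ 3 * (b xt * α * deriv U ξ
                + 2 * ∑ i : Fin m, pd i (fun y => axD ut (ξ, y)) xt * pd i χ xt)
            + δ ^ 4 * (α ^ 2 * deriv (deriv U) ξ
                + 2 * α * axD (axD ut) (ξ, xt)
                + axD (axD ut) (ξ, xt) * gradSq χ xt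
                - γ * α * deriv U ξ - c₀ * α * axD ut (ξ, xt) - γ * axD ut (ξ, xt))
            + δ ^ 5 * (α * b xt * axD ut (ξ, xt))
            + δ ^ 6 * (α ^ 2 * axD (axD ut) (ξ, xt) - α * γ * axD ut (ξ, xt))
            + (f (v (x₁, xt)) - f (U ξ) - deriv f (U ξ) * (δ ^ 2 * ut (ξ, xt)))) :=
  multiscale_expansion_identity_general lo hi f U hU c₀ hode b χ hχ hχeq a₀ α γ hα hγ ut hut hutEq δ
    v hv

end
end

section
/- (Maximum principle on the line.) Let r₀ > 0, c₀ ∈ ℝ, and let q : ℝ → ℝ satisfy q(ξ) ≤ 0 for all |ξ| ≥ r₀. Let w ∈ C²(ℝ) satisfy: w(ξ) → 0 as ξ → ±∞; w(ξ) > 0 for all |ξ| ≤ r₀; and w''(ξ) − c₀ w'(ξ) + q(ξ) w(ξ) < 0 for all |ξ| > r₀. Then w(ξ) > 0 for all ξ ∈ ℝ. -/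
/-!
A nonpositive value of `w` forces a nonpositive global minimum, since `w → 0` at `±∞`. That
minimum lies in `|ξ| > r₀` because `w > 0` on `[-r₀, r₀]`; there `w' = 0`, `w'' ≥ 0` and
`q w ≥ 0`, so `w'' − c₀ w' + q w ≥ 0`, contradicting the differential inequality.
-/

open Filter Topology

theorem IsLocalMin.deriv_deriv_nonneg {f : ℝ → ℝ} {a : ℝ} (hmin : IsLocalMin f a)
    (hc : ContinuousAt f a) : 0 ≤ deriv (deriv f) a := by
  by_contra! hneg
  have hmax : IsLocalMax f a := isLocalMax_of_deriv_deriv_neg hneg hmin.deriv_eq_zero hc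
  have hconst : f =ᶠ[𝓝 a] fun _ => f a :=
    (hmin.and hmax).mono fun _ hx => le_antisymm hx.2 hx.1
  have hzero : deriv (deriv f) a = 0 := by
    rw [hconst.deriv.deriv_eq]
    simp
  exact hneg.ne hzero

theorem Continuous.exists_forall_le_of_tendsto_cocompact {β α : Type*} [TopologicalSpace β]
    [LinearOrder α] [TopologicalSpace α] [OrderClosedTopology α] {f : β → α} {c : α}
    (hf : Continuous f) (hlim : Tendsto f (cocompact β) (𝓝 c)) {x₀ : β} (hx₀ : f x₀ ≤ c) :
    ∃ x, f x ≤ c ∧ ∀ y, f x ≤ f y := by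
  by_cases hbelow : ∃ x₁, f x₁ < c
  · obtain ⟨x₁, hx₁⟩ := hbelow
    obtain ⟨x, hx⟩ := hf.exists_forall_le' x₁ ((hlim.eventually (eventually_gt_nhds hx₁)).mono
      fun _ hy => hy.le)
    exact ⟨x, (hx x₁).trans hx₁.le, hx⟩
  · simp only [not_exists, not_lt] at hbelow
    exact ⟨x₀, hx₀, fun y => hx₀.trans (hbelow y)⟩

theorem maximum_principle_on_line_general (r₀ c₀ : ℝ) (q w : ℝ → ℝ)
    (hq : ∀ ξ : ℝ, r₀ ≤ |ξ| → q ξ ≤ 0)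
    (hw : ContDiff ℝ 2 w)
    (hlim_top : Tendsto w atTop (nhds 0))
    (hlim_bot : Tendsto w atBot (nhds 0))
    (hpos : ∀ ξ : ℝ, |ξ| ≤ r₀ → 0 < w ξ)
    (hsub : ∀ ξ : ℝ, r₀ < |ξ| → deriv (deriv w) ξ - c₀ * deriv w ξ + q ξ * w ξ < 0) :
    ∀ ξ : ℝ, 0 < w ξ := by
  intro ξ
  by_contra! hξ
  have hlim : Tendsto w (cocompact ℝ) (𝓝 0) := by
    rw [cocompact_eq_atBot_atTop]
    exact hlim_bot.sup hlim_top
  obtain ⟨m, hm_nonpos, hm_min⟩ := hw.continuous.exists_forall_le_of_tendsto_cocompact hlim hξ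
  have hm_far : r₀ < |m| := lt_of_not_ge fun hm_near => (hpos m hm_near).not_ge hm_nonpos
  have hmin : IsLocalMin w m := Eventually.of_forall hm_min
  have hd1 : deriv w m = 0 := hmin.deriv_eq_zero
  have hd2 : 0 ≤ deriv (deriv w) m := hmin.deriv_deriv_nonneg hw.continuous.continuousAt
  have hqw : 0 ≤ q m * w m := mul_nonneg_of_nonpos_of_nonpos (hq m hm_far.le) hm_nonpos
  have hsub_m := hsub m hm_far
  rw [hd1, mul_zero] at hsub_m
  linarith

/-- **Maximum principle on the line.**
Let `q(ξ) ≤ 0` for `|ξ| ≥ r₀`, and let `w ∈ C²(ℝ)` tend to `0` at `±∞`, be positive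
on `|ξ| ≤ r₀`, and satisfy `w'' − c₀w' + qw < 0` for `|ξ| > r₀`. Then `w > 0` on `ℝ`. -/
theorem maximum_principle_on_line (r₀ c₀ : ℝ) (hr₀ : 0 < r₀) (q w : ℝ → ℝ)
    (hq : ∀ ξ : ℝ, r₀ ≤ |ξ| → q ξ ≤ 0)
    (hw : ContDiff ℝ 2 w)
    (hlim_top : Tendsto w atTop (nhds 0))
    (hlim_bot : Tendsto w atBot (nhds 0))
    (hpos : ∀ ξ : ℝ, |ξ| ≤ r₀ → 0 < w ξ)
    (hsub : ∀ ξ : ℝ, r₀ < |ξ| → deriv (deriv w) ξ - c₀ * deriv w ξ + q ξ * w ξ < 0) :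
    ∀ ξ : ℝ, 0 < w ξ :=
  maximum_principle_on_line_general r₀ c₀ q w hq hw hlim_top hlim_bot hpos hsub
end

section
/- (No-resonance bound on modal correctors.) Let f ∈ C¹, c₀ ∈ ℝ, and let U ∈ C²(ℝ) satisfy U'' − c₀U' + f(U) = 0, U' > 0 on ℝ, U'(ξ) → 0 as ξ → ±∞, |U''(ξ)| ≤ M U'(ξ) for all ξ and some M > 0, and f'(U(ξ)) ≤ 0 for all |ξ| ≥ r₀, for some r₀ > 0. Let λ* > 0 and C₁ > 0. Then there exists a constant C₃ > 0, depending only on c₀, r₀, M, λ*, C₁, min_{|ξ| ≤ r₀} U'(ξ), and sup U', such that: for every λ ≥ λ*, every a ∈ ℝ, and every u ∈ C²(ℝ) with u(ξ) → 0 as ξ → ±∞, ‖u‖_{C²(ℝ)} ≤ C₁|a|, and u''(ξ) − λ u(ξ) − c₀ u'(ξ) + f'(U(ξ)) u(ξ) = −a U''(ξ) for all ξ, one has |u(ξ)| ≤ C₃ |a| U'(ξ) for all ξ ∈ ℝ. -/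
/-!
Comparison with the barrier `K|a|U' ± u`. Differentiating the profile equation shows that `U'`
solves the linearized equation `φ'' - c₀φ' + f'(U)φ = 0`, so `w = K|a|U' + u` satisfies
`w'' - c₀w' - (λ - f'(U))w = -λK|a|U' - aU''`, which is `≤ 0` once `λK ≥ M`. At a negative minimum
of `w` (which exists because `w → 0` at `±∞`) we would have `w' = 0`, `w'' ≥ 0`, while the identity
gives `w'' < 0` wherever `f'(U) ≤ 0`; on the remaining core `|ξ| < r₀` the crude bound
`|u| ≤ C₁|a|` and `U' ≥ min_{[-r₀, r₀]} U'` already give `w ≥ 0`. Hence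
`C₃ = max (M / λ*) (C₁ / min_{[-r₀, r₀]} U')` works.
-/

open Filter Topology

theorem IsLocalMin.deriv_deriv_nonneg_s10 {g : ℝ → ℝ} {x : ℝ} (hmin : IsLocalMin g x)
    (hg : ContinuousAt g x) : 0 ≤ deriv (deriv g) x := by
  by_contra! hneg
  have hconst : g =ᶠ[𝓝 x] fun _ => g x :=
    (hmin.and (isLocalMax_of_deriv_deriv_neg hneg hmin.deriv_eq_zero hg)).mono
      fun y hy => le_antisymm hy.2 hy.1
  have hflat : deriv g =ᶠ[𝓝 x] fun _ => 0 := by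
    simpa using hconst.deriv
  simp [hflat.deriv_eq] at hneg

theorem Continuous.nonneg_of_isLocalMin_nonneg {v : ℝ → ℝ} (hv : Continuous v)
    (htop : Tendsto v atTop (𝓝 0)) (hbot : Tendsto v atBot (𝓝 0))
    (hmin : ∀ x, IsLocalMin v x → 0 ≤ v x) (x : ℝ) : 0 ≤ v x := by
  by_contra! hx
  have hfar : ∀ᶠ y in cocompact ℝ, v x ≤ v y := by
    rw [cocompact_eq_atBot_atTop]
    exact eventually_sup.mpr
      ⟨hbot.eventually (eventually_ge_nhds hx), htop.eventually (eventually_ge_nhds hx)⟩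
  obtain ⟨y, hy⟩ := hv.exists_forall_le' x hfar
  have hlocal : IsLocalMin v y := (isMinOn_univ_iff.mpr hy).isLocalMin univ_mem
  linarith [hmin y hlocal, hy x]

theorem hasDerivAt_deriv_deriv_of_ode {f U : ℝ → ℝ} {c₀ : ℝ} (hf : Differentiable ℝ f)
    (hU : Differentiable ℝ U) (hU' : Differentiable ℝ (deriv U))
    (hode : ∀ ξ, deriv (deriv U) ξ - c₀ * deriv U ξ + f (U ξ) = 0) (ξ : ℝ) :
    HasDerivAt (deriv (deriv U)) (c₀ * deriv (deriv U) ξ - deriv f (U ξ) * deriv U ξ) ξ :=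
  (((hU' ξ).hasDerivAt.const_mul c₀).sub ((hf (U ξ)).hasDerivAt.comp ξ (hU ξ).hasDerivAt))
    |>.congr_of_eventuallyEq (.of_forall fun η => by
      simp only [Pi.sub_apply, Function.comp_apply]; linarith [hode η])

section Comparison

variable {φ u q : ℝ → ℝ} {c₀ lam K a : ℝ}

theorem neg_le_mul_of_resolvent_eq (hφ : Differentiable ℝ φ) (hφ' : Differentiable ℝ (deriv φ))
    (hu : Differentiable ℝ u) (hu' : Differentiable ℝ (deriv u))
    (hφ_eq : ∀ x, deriv (deriv φ) x - c₀ * deriv φ x + q x * φ x = 0)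
    (hu_eq : ∀ x, deriv (deriv u) x - lam * u x - c₀ * deriv u x + q x * u x = -a * deriv φ x)
    (hlam : 0 < lam) (hφ_bound : ∀ x, |deriv φ x| ≤ lam * K * φ x)
    (hφ_top : Tendsto φ atTop (𝓝 0)) (hφ_bot : Tendsto φ atBot (𝓝 0))
    (hu_top : Tendsto u atTop (𝓝 0)) (hu_bot : Tendsto u atBot (𝓝 0))
    (hcore : ∀ x, 0 < q x → -u x ≤ K * |a| * φ x) (x : ℝ) :
    -u x ≤ K * |a| * φ x := by
  set w : ℝ → ℝ := fun x => K * |a| * φ x + u x with hw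
  have hw' : deriv w = fun x => K * |a| * deriv φ x + deriv u x :=
    funext fun x => (((hφ x).hasDerivAt.const_mul _).add (hu x).hasDerivAt).deriv
  have hw'' (x : ℝ) : deriv (deriv w) x = K * |a| * deriv (deriv φ) x + deriv (deriv u) x := by
    rw [hw']
    exact (((hφ' x).hasDerivAt.const_mul _).add (hu' x).hasDerivAt).deriv
  suffices 0 ≤ w x by simp only [hw] at this; linarith
  have hwc : Continuous w := (hφ.continuous.const_mul _).add hu.continuous
  refine hwc.nonneg_of_isLocalMin_nonneg
    (by simpa using (hφ_top.const_mul (K * |a|)).add hu_top)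
    (by simpa using (hφ_bot.const_mul (K * |a|)).add hu_bot) (fun y hmin => ?_) x
  by_contra! hneg
  have hq : q y ≤ 0 := by
    by_contra! hq
    linarith [hcore y hq]
  have hslope : deriv w y = 0 := hmin.deriv_eq_zero
  have hconvex : 0 ≤ deriv (deriv w) y := hmin.deriv_deriv_nonneg_s10 hwc.continuousAt
  have hforcing : 0 ≤ lam * K * |a| * φ y + a * deriv φ y := by
    have := mul_le_mul_of_nonneg_left (hφ_bound y) (abs_nonneg a)
    have := neg_abs_le (a * deriv φ y)
    rw [abs_mul] at this
    linarith
  have hdamping : (lam - q y) * w y < 0 := mul_neg_of_pos_of_neg (by linarith) hneg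
  have hw''_y : deriv (deriv w) y
      = c₀ * deriv w y + (lam - q y) * w y - (lam * K * |a| * φ y + a * deriv φ y) := by
    rw [hw'', hw']
    simp only [hw]
    linear_combination K * |a| * hφ_eq y + hu_eq y
  rw [hslope, mul_zero] at hw''_y
  linarith

theorem abs_le_mul_of_resolvent_eq (hφ : Differentiable ℝ φ) (hφ' : Differentiable ℝ (deriv φ))
    (hu : Differentiable ℝ u) (hu' : Differentiable ℝ (deriv u))
    (hφ_eq : ∀ x, deriv (deriv φ) x - c₀ * deriv φ x + q x * φ x = 0)
    (hu_eq : ∀ x, deriv (deriv u) x - lam * u x - c₀ * deriv u x + q x * u x = -a * deriv φ x)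
    (hlam : 0 < lam) (hφ_bound : ∀ x, |deriv φ x| ≤ lam * K * φ x)
    (hφ_top : Tendsto φ atTop (𝓝 0)) (hφ_bot : Tendsto φ atBot (𝓝 0))
    (hu_top : Tendsto u atTop (𝓝 0)) (hu_bot : Tendsto u atBot (𝓝 0))
    (hcore : ∀ x, 0 < q x → |u x| ≤ K * |a| * φ x) (x : ℝ) :
    |u x| ≤ K * |a| * φ x := by
  have hderiv : deriv (-u) = -deriv u := funext fun _ => deriv.neg
  have hneg_eq (x : ℝ) : deriv (deriv (-u)) x - lam * (-u) x - c₀ * deriv (-u) x + q x * (-u) x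
      = -(-a) * deriv φ x := by
    simp only [hderiv, deriv.neg, Pi.neg_apply]
    linear_combination -hu_eq x
  have hlower := neg_le_mul_of_resolvent_eq hφ hφ' hu hu' hφ_eq hu_eq hlam hφ_bound hφ_top hφ_bot
    hu_top hu_bot (fun y hy => (neg_le_abs _).trans (hcore y hy)) x
  have hupper := neg_le_mul_of_resolvent_eq (u := -u) (a := -a) hφ hφ' hu.neg
    (hderiv ▸ hu'.neg) hφ_eq hneg_eq hlam hφ_bound hφ_top hφ_bot
    (by rw [← neg_zero]; exact hu_top.neg) (by rw [← neg_zero]; exact hu_bot.neg)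
    (fun y hy => by rw [Pi.neg_apply, neg_neg, abs_neg]; exact (le_abs_self _).trans (hcore y hy))
    x
  rw [abs_neg, Pi.neg_apply, neg_neg] at hupper
  exact abs_le.mpr ⟨by linarith, hupper⟩

end Comparison

theorem no_resonance_modal_bound_general (f U : ℝ → ℝ) (c₀ r₀ M lamStar C₁ : ℝ)
    (hf : ContDiff ℝ 1 f) (hU : ContDiff ℝ 2 U)
    (hode : ∀ ξ : ℝ, deriv (deriv U) ξ - c₀ * deriv U ξ + f (U ξ) = 0)
    (hU'pos : ∀ ξ : ℝ, 0 < deriv U ξ)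
    (hU'top : Tendsto (deriv U) atTop (nhds 0))
    (hU'bot : Tendsto (deriv U) atBot (nhds 0))
    (hM : 0 < M)
    (hU'' : ∀ ξ : ℝ, |deriv (deriv U) ξ| ≤ M * deriv U ξ)
    (hr₀ : 0 < r₀)
    (hfU : ∀ ξ : ℝ, r₀ ≤ |ξ| → deriv f (U ξ) ≤ 0)
    (hlamStar : 0 < lamStar) :
    ∃ C₃ : ℝ, 0 < C₃ ∧
      ∀ lam : ℝ, lamStar ≤ lam → ∀ a : ℝ, ∀ u : ℝ → ℝ,
        ContDiff ℝ 2 u →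
        Tendsto u atTop (nhds 0) → Tendsto u atBot (nhds 0) →
        (∀ ξ : ℝ, |u ξ| + |deriv u ξ| + |deriv (deriv u) ξ| ≤ C₁ * |a|) →
        (∀ ξ : ℝ, deriv (deriv u) ξ - lam * u ξ - c₀ * deriv u ξ
            + deriv f (U ξ) * u ξ = -a * deriv (deriv U) ξ) →
        ∀ ξ : ℝ, |u ξ| ≤ C₃ * |a| * deriv U ξ := by
  have hU''' := hasDerivAt_deriv_deriv_of_ode (hf.differentiable one_ne_zero)
    (hU.differentiable two_ne_zero) hU.differentiable_deriv_two hode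
  obtain ⟨ξm, -, hξm⟩ := isCompact_Icc.exists_isMinOn (Set.nonempty_Icc.mpr (by linarith))
    (hU.differentiable_deriv_two.continuous.continuousOn (s := Set.Icc (-r₀) r₀))
  set m := deriv U ξm
  set K := max (M / lamStar) (C₁ / m)
  have hK : 0 < K := lt_max_of_lt_left (div_pos hM hlamStar)
  refine ⟨K, hK, fun lam hlam a u hu hu_top hu_bot hu_bound hu_eq => ?_⟩
  have hMK : M ≤ lam * K := calc
    M ≤ lamStar * K := (div_le_iff₀' hlamStar).mp (le_max_left _ _)
    _ ≤ lam * K := by gcongr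
  refine abs_le_mul_of_resolvent_eq hU.differentiable_deriv_two
    (fun ξ => (hU''' ξ).differentiableAt) (hu.differentiable two_ne_zero)
    hu.differentiable_deriv_two (fun ξ => by rw [(hU''' ξ).deriv]; ring) hu_eq (hlamStar.trans_le hlam)
    (fun ξ => (hU'' ξ).trans (by gcongr; exact (hU'pos ξ).le)) hU'top hU'bot hu_top hu_bot ?_
  intro ξ hξ
  have hcore : ξ ∈ Set.Icc (-r₀) r₀ :=
    abs_le.mp (le_of_not_ge fun h => hξ.not_ge (hfU ξ h))
  calc |u ξ| ≤ C₁ * |a| := by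
        linarith [hu_bound ξ, abs_nonneg (deriv u ξ), abs_nonneg (deriv (deriv u) ξ)]
    _ ≤ K * m * |a| := by gcongr; exact (div_le_iff₀ (hU'pos ξm)).mp (le_max_right _ _)
    _ ≤ K * |a| * deriv U ξ := by rw [mul_right_comm]; gcongr; exact hξm hcore

/-- **No-resonance bound on the modal correctors.**
Under the stated hypotheses on the front `U`, there is a constant `C₃` (depending only
on the data listed, not on `λ ≥ λ*`, `a`, or `u`) such that any solution `u` of
`u'' − λu − c₀u' + f'(U)u = −aU''` vanishing at `±∞` with `‖u‖_{C²} ≤ C₁|a|`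
satisfies `|u(ξ)| ≤ C₃|a| U'(ξ)` for all `ξ`. -/
theorem no_resonance_modal_bound (f U : ℝ → ℝ) (c₀ r₀ M lamStar C₁ : ℝ)
    (hf : ContDiff ℝ 1 f) (hU : ContDiff ℝ 2 U)
    (hode : ∀ ξ : ℝ, deriv (deriv U) ξ - c₀ * deriv U ξ + f (U ξ) = 0)
    (hU'pos : ∀ ξ : ℝ, 0 < deriv U ξ)
    (hU'top : Tendsto (deriv U) atTop (nhds 0))
    (hU'bot : Tendsto (deriv U) atBot (nhds 0))
    (hM : 0 < M)
    (hU'' : ∀ ξ : ℝ, |deriv (deriv U) ξ| ≤ M * deriv U ξ)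
    (hr₀ : 0 < r₀)
    (hfU : ∀ ξ : ℝ, r₀ ≤ |ξ| → deriv f (U ξ) ≤ 0)
    (hlamStar : 0 < lamStar) (hC₁ : 0 < C₁) :
    ∃ C₃ : ℝ, 0 < C₃ ∧
      ∀ lam : ℝ, lamStar ≤ lam → ∀ a : ℝ, ∀ u : ℝ → ℝ,
        ContDiff ℝ 2 u →
        Tendsto u atTop (nhds 0) → Tendsto u atBot (nhds 0) →
        (∀ ξ : ℝ, |u ξ| + |deriv u ξ| + |deriv (deriv u) ξ| ≤ C₁ * |a|) →
        (∀ ξ : ℝ, deriv (deriv u) ξ - lam * u ξ - c₀ * deriv u ξ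
            + deriv f (U ξ) * u ξ = -a * deriv (deriv U) ξ) →
        ∀ ξ : ℝ, |u ξ| ≤ C₃ * |a| * deriv U ξ :=
  no_resonance_modal_bound_general f U c₀ r₀ M lamStar C₁ hf hU hode hU'pos hU'top hU'bot hM hU''
    hr₀ hfU hlamStar
end

section
/- (Hölder modulus under a logarithmic weight.) Let 0 < s < 1, K > 0, and let p : [0, 1] → [0, ∞) be continuous and nondecreasing with p(0) = 0 and p(u) ≤ K u^s for all u ∈ [0, 1]. Then for every s' ∈ (0, s) there exists a constant C = C(K, s, s') such that for all h ∈ (0, 1/2]: ∫₀^h (−log u)^{1/2} dp(u) ≤ C h^{s'}, where the integral is the Lebesgue–Stieltjes integral with respect to the nondecreasing function p. -/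
open MeasureTheory

/-- A continuous nondecreasing function determines a Stieltjes function. -/
noncomputable def continuousStieltjes (p : ℝ → ℝ) (hmono : Monotone p)
    (hcont : Continuous p) : StieltjesFunction ℝ :=
  ⟨p, hmono, fun x => (hcont.continuousAt).continuousWithinAt⟩

/-!
Bound the weight by `√(-log u) ≤ (2ε)^{-1/2} u^{-ε}` with `ε = s - s'`, and cut `(0, h]`
into the dyadic blocks `(h/2^{k+1}, h/2^k]`. On the `k`-th block `u^{-ε} ≤ 2^ε (h/2^k)^{-ε}`
while the `dp`-mass is at most `p(h/2^k) ≤ K (h/2^k)^s`, so the block contributes at most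
`2^ε K (h/2^k)^{s-ε}`; these form a geometric series with sum a constant times
`h^{s-ε} = h^{s'}`.
-/

open Set ENNReal Real

lemma Real.sqrt_neg_log_le_mul_rpow_neg {u ε : ℝ} (hu : 0 < u) (hε : 0 < ε) :
    √(-log u) ≤ (√(2 * ε))⁻¹ * u ^ (-ε) := by
  rw [sqrt_le_iff]
  refine ⟨by positivity, ?_⟩
  calc -log u = log u⁻¹ := (log_inv u).symm
    _ ≤ u⁻¹ ^ (2 * ε) / (2 * ε) := log_le_rpow_div (inv_nonneg.2 hu.le) (by positivity)
    _ = ((√(2 * ε))⁻¹ * u ^ (-ε)) ^ 2 := by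
        rw [mul_pow, inv_pow, sq_sqrt (by positivity), ← rpow_natCast, ← rpow_mul hu.le,
          inv_rpow hu.le, ← rpow_neg hu.le]
        ring_nf

lemma Set.Ioc_zero_subset_iUnion_Ioc_div_pow {h b : ℝ} (hb : 1 < b) :
    Ioc 0 h ⊆ ⋃ k : ℕ, Ioc (h / b ^ (k + 1)) (h / b ^ k) := by
  rintro u ⟨hu, huh⟩
  obtain ⟨k, hk, hk'⟩ := exists_nat_pow_near ((one_le_div hu).2 huh) hb
  refine mem_iUnion.2 ⟨k, ?_, ?_⟩
  · rw [div_lt_iff₀ (by positivity)]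
    rwa [div_lt_iff₀ hu, mul_comm] at hk'
  · rw [le_div_iff₀ (by positivity)]
    rwa [le_div_iff₀ hu, mul_comm] at hk

lemma hasSum_div_pow_rpow {h b a : ℝ} (hh : 0 ≤ h) (hb : 1 < b) (ha : 0 < a) :
    HasSum (fun k : ℕ => (h / b ^ k) ^ a) (h ^ a * (1 - (b ^ a)⁻¹)⁻¹) := by
  have hr : (b ^ a)⁻¹ < 1 := inv_lt_one_of_one_lt₀ (one_lt_rpow hb ha)
  have hterm : ∀ k : ℕ, (h / b ^ k) ^ a = h ^ a * ((b ^ a)⁻¹) ^ k := fun k => by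
    rw [div_rpow hh (by positivity), ← rpow_pow_comm (by positivity), div_eq_mul_inv, inv_pow]
  simpa only [hterm] using (hasSum_geometric_of_lt_one (by positivity) hr).mul_left (h ^ a)

theorem setLIntegral_Ioc_rpow_neg_le {μ : Measure ℝ} {K s ε h : ℝ} (hK : 0 ≤ K) (hε : 0 ≤ ε)
    (hεs : ε < s) (hh : 0 < h)
    (hμ : ∀ y ∈ Ioc 0 h, μ (Ioc 0 y) ≤ ENNReal.ofReal (K * y ^ s)) :
    ∫⁻ u in Ioc 0 h, ENNReal.ofReal (u ^ (-ε)) ∂μ ≤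
      ENNReal.ofReal (2 ^ ε * K * (h ^ (s - ε) * (1 - (2 ^ (s - ε))⁻¹)⁻¹)) := by
  set t : ℕ → ℝ := fun k => h / 2 ^ k
  have ht : ∀ k, 0 < t k := fun k => by positivity
  have hblock : ∀ k, ∫⁻ u in Ioc (t (k + 1)) (t k), ENNReal.ofReal (u ^ (-ε)) ∂μ ≤
      ENNReal.ofReal (2 ^ ε * K * t k ^ (s - ε)) := by
    intro k
    have ht_succ : t (k + 1) = t k / 2 := by simp only [t, pow_succ, div_div]
    calc _ ≤ ∫⁻ _ in Ioc (t (k + 1)) (t k), ENNReal.ofReal (t (k + 1) ^ (-ε)) ∂μ :=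
          setLIntegral_mono measurable_const fun u hu =>
            ofReal_le_ofReal (rpow_le_rpow_of_nonpos (ht _) hu.1.le (neg_nonpos.2 hε))
      _ = ENNReal.ofReal (t (k + 1) ^ (-ε)) * μ (Ioc (t (k + 1)) (t k)) := setLIntegral_const _ _
      _ ≤ ENNReal.ofReal (t (k + 1) ^ (-ε)) * ENNReal.ofReal (K * t k ^ s) := by
          gcongr
          exact (measure_mono (Ioc_subset_Ioc_left (ht _).le)).trans
            (hμ _ ⟨ht k, div_le_self hh.le (one_le_pow₀ one_le_two)⟩)
      _ = ENNReal.ofReal (2 ^ ε * K * t k ^ (s - ε)) := by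
          rw [← ENNReal.ofReal_mul (by positivity), ht_succ, div_rpow (ht k).le zero_le_two,
            rpow_neg (ht k).le, rpow_neg zero_le_two, rpow_sub (ht k)]
          field_simp
  have hsum := (hasSum_div_pow_rpow hh.le one_lt_two (sub_pos.2 hεs)).mul_left (2 ^ ε * K)
  calc ∫⁻ u in Ioc 0 h, ENNReal.ofReal (u ^ (-ε)) ∂μ
      ≤ ∫⁻ u in ⋃ k : ℕ, Ioc (t (k + 1)) (t k), ENNReal.ofReal (u ^ (-ε)) ∂μ :=
        lintegral_mono_set (Ioc_zero_subset_iUnion_Ioc_div_pow one_lt_two)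
    _ ≤ ∑' k, ∫⁻ u in Ioc (t (k + 1)) (t k), ENNReal.ofReal (u ^ (-ε)) ∂μ :=
        lintegral_iUnion_le _ _
    _ ≤ ∑' k, ENNReal.ofReal (2 ^ ε * K * t k ^ (s - ε)) := ENNReal.tsum_le_tsum hblock
    _ = _ := by
        rw [← ENNReal.ofReal_tsum_of_nonneg (fun k => by positivity) hsum.summable, hsum.tsum_eq]

lemma continuousStieltjes_measure_Ioc_zero_le {s K : ℝ} {p : ℝ → ℝ} (hmono : Monotone p)
    (hcont : Continuous p) (hp0 : p 0 = 0) (hpK : ∀ u ∈ Icc (0:ℝ) 1, p u ≤ K * u ^ s)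
    {y : ℝ} (hy : y ∈ Icc (0:ℝ) 1) :
    (continuousStieltjes p hmono hcont).measure (Ioc 0 y) ≤ ENNReal.ofReal (K * y ^ s) := by
  rw [StieltjesFunction.measure_Ioc]
  exact ofReal_le_ofReal (by simpa [continuousStieltjes, hp0] using hpK y hy)

theorem holder_modulus_log_weight_general (s K : ℝ) (hK : 0 < K)
    (p : ℝ → ℝ) (hmono : Monotone p) (hcont : Continuous p)
    (hp0 : p 0 = 0) (hpK : ∀ u ∈ Set.Icc (0:ℝ) 1, p u ≤ K * u ^ s) :
    ∀ s' : ℝ, 0 < s' → s' < s →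
      ∃ C : ℝ, 0 < C ∧ ∀ h : ℝ, 0 < h → h ≤ 1 / 2 →
        ∫ u in Set.Ioc (0:ℝ) h, Real.sqrt (-Real.log u)
            ∂(continuousStieltjes p hmono hcont).measure
          ≤ C * h ^ s' := by
  intro s' hs' hs's
  set ε := s - s'
  have hε : 0 < ε := sub_pos.2 hs's
  set c := (√(2 * ε))⁻¹
  have hgeom : 0 < 1 - ((2 : ℝ) ^ s')⁻¹ :=
    sub_pos.2 (inv_lt_one_of_one_lt₀ (one_lt_rpow one_lt_two hs'))
  refine ⟨c * (2 ^ ε * K * (1 - (2 ^ s')⁻¹)⁻¹), by positivity, fun h hh hh2 => ?_⟩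
  set μ := (continuousStieltjes p hmono hcont).measure
  have hμ (y : ℝ) (hy : y ∈ Ioc 0 h) : μ (Ioc 0 y) ≤ ENNReal.ofReal (K * y ^ s) :=
    continuousStieltjes_measure_Ioc_zero_le hmono hcont hp0 hpK ⟨hy.1.le, by linarith [hy.2]⟩
  rw [integral_eq_lintegral_of_nonneg_ae (ae_of_all _ fun _ => sqrt_nonneg _) (by fun_prop)]
  apply ENNReal.toReal_le_of_le_ofReal (by positivity)
  calc ∫⁻ u in Ioc 0 h, ENNReal.ofReal √(-log u) ∂μ
      ≤ ∫⁻ u in Ioc 0 h, ENNReal.ofReal c * ENNReal.ofReal (u ^ (-ε)) ∂μ :=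
        setLIntegral_mono' measurableSet_Ioc fun u hu => by
          rw [← ENNReal.ofReal_mul (by positivity)]
          exact ofReal_le_ofReal (sqrt_neg_log_le_mul_rpow_neg hu.1 hε)
    _ = ENNReal.ofReal c * ∫⁻ u in Ioc 0 h, ENNReal.ofReal (u ^ (-ε)) ∂μ :=
        lintegral_const_mul _ (by fun_prop)
    _ ≤ ENNReal.ofReal c *
          ENNReal.ofReal (2 ^ ε * K * (h ^ (s - ε) * (1 - (2 ^ (s - ε))⁻¹)⁻¹)) := by
        gcongr
        exact setLIntegral_Ioc_rpow_neg_le hK.le hε.le (sub_lt_self s hs') hh hμ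
    _ = _ := by
        rw [← ENNReal.ofReal_mul (by positivity), sub_sub_cancel s s']
        ring_nf

/-- **Hölder modulus under a logarithmic weight.**
If `p` is continuous, nondecreasing, with `p(0) = 0` and `p(u) ≤ K uˢ` on `[0,1]`,
then for every `s' ∈ (0, s)` there is `C = C(K,s,s')` with
`∫₀ʰ (−log u)^{1/2} dp(u) ≤ C h^{s'}` for all `h ∈ (0, 1/2]`, the integral being the
Lebesgue–Stieltjes integral with respect to `p`. -/
theorem holder_modulus_log_weight (s K : ℝ) (hs : 0 < s) (hs1 : s < 1) (hK : 0 < K)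
    (p : ℝ → ℝ) (hmono : Monotone p) (hcont : Continuous p)
    (hp0 : p 0 = 0) (hpK : ∀ u ∈ Set.Icc (0:ℝ) 1, p u ≤ K * u ^ s) :
    ∀ s' : ℝ, 0 < s' → s' < s →
      ∃ C : ℝ, 0 < C ∧ ∀ h : ℝ, 0 < h → h ≤ 1 / 2 →
        ∫ u in Set.Ioc (0:ℝ) h, Real.sqrt (-Real.log u)
            ∂(continuousStieltjes p hmono hcont).measure
          ≤ C * h ^ s' :=
  holder_modulus_log_weight_general s K hK p hmono hcont hp0 hpK
end
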